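/- Fix a real number c and an integer m ≥ 1. For three-state spins s : Fin m → Fin 3 with bond weight w(s,s′) = 1 if s = s′ and c otherwise, one has ∑_{s : Fin m → Fin 3} ∏_{i=1}^{m−1} w(s_i, s_{i+1}) = 3·(1 + 2c)^{m−1}. Consequently, with c = e^{−2εt}, site weight q^{−2} per site and boundary weight e^{−2εt} on each of the two boundary bonds of the operator support, the infinite-q fluctuation of the two-point autocorrelation function of an operator supported on a single connected region of m sites in a time-reversal-symmetric chain equals q^{−2m} · 3·e^{−4εt} · (1 + 2·e^{−2εt})^{m−1}. -/
import Mathlib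

open BigOperators

lemma potts_chain (c : ℝ) (n : ℕ) :
    (∑ s : Fin (n + 1) → Fin 3, ∏ i : Fin n,
        (if s i.castSucc = s i.succ then (1 : ℝ) else c))
      = 3 * (1 + 2 * c) ^ n := by
  induction n with
  | zero => simp
  | succ n ih =>
    have key : ∀ x : Fin 3, ∀ s : Fin (n + 1) → Fin 3,
        (∏ i : Fin (n + 1), (if (Fin.cons x s : Fin (n + 2) → Fin 3) i.castSucc = (Fin.cons x s : Fin (n + 2) → Fin 3) i.succ then (1:ℝ) else c))
        = (if x = s 0 then (1:ℝ) else c) *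
          ∏ i : Fin n, (if s i.castSucc = s i.succ then (1:ℝ) else c) := by
      intro x s
      rw [Fin.prod_univ_succ]
      congr 1
    have step : (∑ s : Fin (n + 2) → Fin 3, ∏ i : Fin (n + 1),
          (if s i.castSucc = s i.succ then (1 : ℝ) else c))
        = ∑ p : Fin 3 × (Fin (n + 1) → Fin 3),
            (if p.1 = p.2 0 then (1:ℝ) else c) *
              ∏ i : Fin n, (if p.2 i.castSucc = p.2 i.succ then (1:ℝ) else c) := by
      refine (Fintype.sum_equiv (Fin.consEquiv (fun _ : Fin (n + 2) => Fin 3))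
        _ _ ?_).symm
      intro p
      simp only [Fin.consEquiv_apply]
      exact (key p.1 p.2).symm
    rw [step, Fintype.sum_prod_type, Finset.sum_comm]
    have hrow : ∀ s : Fin (n + 1) → Fin 3,
        (∑ x : Fin 3, (if x = s 0 then (1:ℝ) else c) *
          ∏ i : Fin n, (if s i.castSucc = s i.succ then (1:ℝ) else c))
        = (1 + 2 * c) * ∏ i : Fin n, (if s i.castSucc = s i.succ then (1:ℝ) else c) := by
      intro s
      rw [← Finset.sum_mul]
      congr 1
      have gen : ∀ a : Fin 3, ∑ x : Fin 3, (if x = a then (1:ℝ) else c) = 1 + 2 * c := by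
        intro a; fin_cases a <;> simp [Fin.sum_univ_three] <;> ring
      exact gen (s 0)
    rw [Finset.sum_congr rfl (fun s _ => hrow s), ← Finset.mul_sum, ih]
    ring

theorem three_state_potts_2paf_fluctuation (c : ℝ) (m : ℕ) (hm : 1 ≤ m)
    (q : ℕ) (hq : 1 ≤ q) (ε t : ℝ) :
    (∑ s : Fin m → Fin 3, ∏ i : Fin (m - 1),
        (if s ⟨i.1, by have := i.isLt; omega⟩ = s ⟨i.1 + 1, by have := i.isLt; omega⟩
          then (1 : ℝ) else c))
      = 3 * (1 + 2 * c) ^ (m - 1)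
    ∧ (((q : ℝ) ^ 2)⁻¹ ^ m * (Real.exp (-2 * ε * t) * Real.exp (-2 * ε * t)) *
        ∑ s : Fin m → Fin 3, ∏ i : Fin (m - 1),
          (if s ⟨i.1, by have := i.isLt; omega⟩ = s ⟨i.1 + 1, by have := i.isLt; omega⟩
            then (1 : ℝ) else Real.exp (-2 * ε * t)))
      = ((q : ℝ) ^ (2 * m))⁻¹ *
          (3 * Real.exp (-4 * ε * t) * (1 + 2 * Real.exp (-2 * ε * t)) ^ (m - 1)) := by
  obtain ⟨n, rfl⟩ : ∃ n, m = n + 1 := ⟨m - 1, by omega⟩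
  have hgen : ∀ d : ℝ, (∑ s : Fin (n + 1) → Fin 3, ∏ i : Fin (n + 1 - 1),
        (if s ⟨i.1, by have := i.isLt; omega⟩ = s ⟨i.1 + 1, by have := i.isLt; omega⟩
          then (1 : ℝ) else d))
      = 3 * (1 + 2 * d) ^ n := by
    intro d
    rw [← potts_chain d n]
    rfl
  refine ⟨by simpa using hgen c, ?_⟩
  rw [hgen (Real.exp (-2 * ε * t))]
  have hq0 : (q : ℝ) ≠ 0 := by positivity
  rw [← Real.exp_add]
  have he : (-2 * ε * t) + (-2 * ε * t) = -4 * ε * t := by ring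
  rw [he, ← inv_pow, ← pow_mul]
  simp only [Nat.add_sub_cancel]
  ring
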